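/- arXiv:2407.08684 — 3 statements merged into one kernel-verified Lean document; each statement's English description precedes it below -/
import Mathlib

section
/- For any finite set D of cells of ℤ², there is at most one partition of D into 2×2 blocks: if T and T' are both partitions of D into 2×2 blocks, then T = T'. -/
/-- A 2×2 block of four cells of ℤ². -/
def IsBlock22 (S : Set (ℤ × ℤ)) : Prop :=
  ∃ x y : ℤ, S = {(x, y), (x + 1, y), (x, y + 1), (x + 1, y + 1)}

/-- A partition of `D ⊆ ℤ²` into 2×2 blocks. -/
def IsBlockPartition (D : Set (ℤ × ℤ)) (T : Set (Set (ℤ × ℤ))) : Prop :=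
  (∀ S ∈ T, IsBlock22 S) ∧
  (∀ S ∈ T, ∀ S' ∈ T, S ≠ S' → Disjoint S S') ∧
  ⋃₀ T = D

/-!
If two block partitions `T ≠ T'` of a finite `D` existed, let `p` be a cell minimising `x + y`
over the cells covered by blocks of `T` not in `T'`. The block of `T'` through `p` is not in `T`,
and every cell it covers also lies in a block of `T` not in `T'`. Since the corner of a block is
the unique cell of the block minimising `x + y`, both blocks through `p` have corner `p`, so they
coincide: a contradiction.
-/

lemma IsBlock22.eq_of_mem_of_forall_add_le {S : Set (ℤ × ℤ)} {p : ℤ × ℤ} (hS : IsBlock22 S)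
    (hp : p ∈ S) (hmin : ∀ q ∈ S, p.1 + p.2 ≤ q.1 + q.2) :
    S = {(p.1, p.2), (p.1 + 1, p.2), (p.1, p.2 + 1), (p.1 + 1, p.2 + 1)} := by
  obtain ⟨x, y, rfl⟩ := hS
  have hcorner := hmin (x, y) (by simp)
  simp only [Set.mem_insert_iff, Set.mem_singleton_iff] at hp
  rcases hp with rfl | rfl | rfl | rfl <;> first | rfl | (simp only at hcorner; omega)

namespace IsBlockPartition

variable {D : Set (ℤ × ℤ)} {T T' : Set (Set (ℤ × ℤ))}

lemma subset_of_mem (hT : IsBlockPartition D T) {S : Set (ℤ × ℤ)} (hS : S ∈ T) : S ⊆ D :=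
  hT.2.2 ▸ Set.subset_sUnion_of_mem hS

lemma exists_mem_of_mem (hT : IsBlockPartition D T) {p : ℤ × ℤ} (hp : p ∈ D) :
    ∃ S ∈ T, p ∈ S := by
  rwa [← hT.2.2, Set.mem_sUnion] at hp

lemma eq_of_mem_of_mem (hT : IsBlockPartition D T) {S S' : Set (ℤ × ℤ)} (hS : S ∈ T)
    (hS' : S' ∈ T) {p : ℤ × ℤ} (hpS : p ∈ S) (hpS' : p ∈ S') : S = S' := by
  by_contra hne
  exact Set.disjoint_left.mp (hT.2.1 S hS S' hS' hne) hpS hpS'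

lemma subset_sUnion_diff (hT : IsBlockPartition D T) (hT' : IsBlockPartition D T')
    {S' : Set (ℤ × ℤ)} (hS' : S' ∈ T') (hS'T : S' ∉ T) : S' ⊆ ⋃₀ (T \ T') := by
  intro q hq
  obtain ⟨R, hR, hqR⟩ := hT.exists_mem_of_mem (hT'.subset_of_mem hS' hq)
  refine ⟨R, ⟨hR, fun hR' => hS'T ?_⟩, hqR⟩
  rwa [← hT'.eq_of_mem_of_mem hR' hS' hqR hq]

lemma subset_of_finite (hD : D.Finite) (hT : IsBlockPartition D T)
    (hT' : IsBlockPartition D T') : T ⊆ T' := by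
  by_contra hTT'
  obtain ⟨S, hS, hST'⟩ := Set.not_subset.mp hTT'
  set E := ⋃₀ (T \ T')
  have hE : E.Finite := hD.subset (Set.sUnion_subset fun R hR => hT.subset_of_mem hR.1)
  obtain ⟨x, y, hSxy⟩ := hT.1 S hS
  have hEne : E.Nonempty := ⟨(x, y), S, ⟨hS, hST'⟩, by simp [hSxy]⟩
  obtain ⟨p, ⟨R, ⟨hR, hRT'⟩, hpR⟩, hmin⟩ := Set.exists_min_image E (fun q => q.1 + q.2) hE hEne
  obtain ⟨R', hR', hpR'⟩ := hT'.exists_mem_of_mem (hT.subset_of_mem hR hpR)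
  have hR'T : R' ∉ T := fun h => hRT' (hT.eq_of_mem_of_mem hR h hpR hpR' ▸ hR')
  have hR'E : R' ⊆ E := hT.subset_sUnion_diff hT' hR' hR'T
  have hRR' : R = R' := by
    rw [(hT.1 R hR).eq_of_mem_of_forall_add_le hpR fun q hq => hmin q ⟨R, ⟨hR, hRT'⟩, hq⟩,
      (hT'.1 R' hR').eq_of_mem_of_forall_add_le hpR' fun q hq => hmin q (hR'E hq)]
  exact hRT' (hRR' ▸ hR')

end IsBlockPartition

theorem unique_block_partition (D : Set (ℤ × ℤ)) (hD : D.Finite)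
    (T T' : Set (Set (ℤ × ℤ)))
    (hT : IsBlockPartition D T) (hT' : IsBlockPartition D T') :
    T = T' :=
  (hT.subset_of_finite hD hT').antisymm (hT'.subset_of_finite hD hT)
end

section
/- Let L, M, N be integers with min{L,M,N} ≥ 2 and let R be the L×M×N box of cells. If c : R → (ℤ/2ℤ)² is a coloring such that for every slab S contained in R the restriction of c to S is injective (each slab contained in R covers exactly one cell of each of the four colors), then there is a permutation σ of (ℤ/2ℤ)² such that c(x,y,z) = σ(φ(x,y,z)) for all (x,y,z) ∈ R, where φ(x,y,z) = (y+z, x+z) (mod 2). In other words, up to permutation of the colors, the box admits only one slab-type coloring. -/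
/-- A slab: an axis-aligned 2×2×1 block of four cells of ℤ³. -/
def IsSlab (S : Set (ℤ × ℤ × ℤ)) : Prop :=
  (∃ x y z : ℤ, S = {(x, y, z), (x + 1, y, z), (x, y + 1, z), (x + 1, y + 1, z)}) ∨
  (∃ x y z : ℤ, S = {(x, y, z), (x + 1, y, z), (x, y, z + 1), (x + 1, y, z + 1)}) ∨
  (∃ x y z : ℤ, S = {(x, y, z), (x, y + 1, z), (x, y, z + 1), (x, y + 1, z + 1)})

/-- A slab tiling of a region `R ⊆ ℤ³`: a partition of `R` into slabs. -/
def IsSlabTiling (R : Set (ℤ × ℤ × ℤ)) (t : Set (Set (ℤ × ℤ × ℤ))) : Prop :=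
  (∀ S ∈ t, IsSlab S) ∧
  (∀ S ∈ t, ∀ S' ∈ t, S ≠ S' → Disjoint S S') ∧
  ⋃₀ t = R

/-- A 2×2×2 block of eight cells of ℤ³. -/
def IsBlock222 (B : Set (ℤ × ℤ × ℤ)) : Prop :=
  ∃ x y z : ℤ, B = {(x, y, z), (x + 1, y, z), (x, y + 1, z), (x + 1, y + 1, z),
    (x, y, z + 1), (x + 1, y, z + 1), (x, y + 1, z + 1), (x + 1, y + 1, z + 1)}

/-- Two tilings differ by a flip. -/
def Flip (t t' : Set (Set (ℤ × ℤ × ℤ))) : Prop :=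
  ∃ P₁ P₂ P₁' P₂' : Set (ℤ × ℤ × ℤ),
    P₁ ∈ t ∧ P₂ ∈ t ∧ P₁' ∈ t' ∧ P₂' ∈ t' ∧
    t \ {P₁, P₂} = t' \ {P₁', P₂'} ∧
    P₁ ∪ P₂ = P₁' ∪ P₂' ∧ IsBlock222 (P₁ ∪ P₂)

/-- The L×M×N box of cells {0,…,L−1}×{0,…,M−1}×{0,…,N−1}. -/
def Box (L M N : ℤ) : Set (ℤ × ℤ × ℤ) :=
  {p | 0 ≤ p.1 ∧ p.1 < L ∧ 0 ≤ p.2.1 ∧ p.2.1 < M ∧ 0 ≤ p.2.2 ∧ p.2.2 < N}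

/-- The coloring φ(x,y,z) = (y+z, x+z) mod 2. -/
def slabColoring (p : ℤ × ℤ × ℤ) : ZMod 2 × ZMod 2 :=
  (((p.2.1 + p.2.2 : ℤ) : ZMod 2), ((p.1 + p.2.2 : ℤ) : ZMod 2))

/-!
In a `2 × 2 × 2` cube the cell antipodal to `p` shares a slab with each of the other three cells
of the horizontal slab through `p`; as that slab already shows all four colors, the antipode has
the color of `p`. So `c` is invariant under diagonal steps `(±1, ±1, ±1)`. Two such steps through
a common neighbour move a cell by `2` along one axis (this needs the other two sides to be at
least `2`), and with one more diagonal step every cell reaches the cell of the base slab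
`{0, 1}² × {0}` with the same value of `φ`. On the base slab `c` is injective and `φ` bijective,
which yields `σ`.
-/

open Set

def IsSlabTypeColoring {α : Type*} (R : Set (ℤ × ℤ × ℤ)) (c : ℤ × ℤ × ℤ → α) : Prop :=
  ∀ S : Set (ℤ × ℤ × ℤ), IsSlab S → S ⊆ R → InjOn c S

section Box

variable {L M N x y z : ℤ}

lemma box_eq_prod (L M N : ℤ) : Box L M N = Ico 0 L ×ˢ Ico 0 M ×ˢ Ico 0 N := by
  ext; simp [Box, and_assoc]

lemma mem_box : (x, y, z) ∈ Box L M N ↔ 0 ≤ x ∧ x < L ∧ 0 ≤ y ∧ y < M ∧ 0 ≤ z ∧ z < N :=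
  Iff.rfl

end Box

section Slabs

variable {x x' y y' z z' : ℤ}

lemma isSlab_prod_xy (hx : (x - x').natAbs = 1) (hy : (y - y').natAbs = 1) (z : ℤ) :
    IsSlab ({x, x'} ×ˢ {y, y'} ×ˢ {z}) :=
  Or.inl ⟨min x x', min y y', z, by ext ⟨a, b, d⟩; simp; omega⟩

lemma isSlab_prod_xz (hx : (x - x').natAbs = 1) (y : ℤ) (hz : (z - z').natAbs = 1) :
    IsSlab ({x, x'} ×ˢ {y} ×ˢ {z, z'}) :=
  Or.inr <| Or.inl ⟨min x x', y, min z z', by ext ⟨a, b, d⟩; simp; omega⟩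

lemma isSlab_prod_yz (x : ℤ) (hy : (y - y').natAbs = 1) (hz : (z - z').natAbs = 1) :
    IsSlab ({x} ×ˢ {y, y'} ×ˢ {z, z'}) :=
  Or.inr <| Or.inr ⟨x, min y y', min z z', by ext ⟨a, b, d⟩; simp; omega⟩

end Slabs

lemma Set.InjOn.image_eq_univ_of_ncard_eq {α β : Type*} [Finite β] {f : α → β} {s : Set α}
    (hf : InjOn f s) (hs : s.ncard = Nat.card β) : f '' s = univ :=
  eq_of_subset_of_ncard_le (subset_univ _) (by rw [ncard_univ, hf.ncard_image, hs])

lemma Int.apply_eq_apply_emod_two {β : Type*} {f : ℤ → β} {K n : ℤ}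
    (hf : ∀ m, 0 ≤ m → m + 2 < K → f m = f (m + 2)) (hn : n ∈ Ico 0 K) : f n = f (n % 2) := by
  rw [mem_Ico] at hn
  have hstep : ∀ k : ℕ, n % 2 + 2 * k < K → f (n % 2 + 2 * k) = f (n % 2) := by
    intro k
    induction k with
    | zero => simp
    | succ k ih =>
      intro hk
      calc f (n % 2 + 2 * ↑(k + 1)) = f (n % 2 + 2 * k + 2) := by push_cast; ring_nf
        _ = f (n % 2 + 2 * k) := (hf _ (by omega) (by omega)).symm
        _ = f (n % 2) := ih (by omega)
  obtain ⟨k, hk⟩ : ∃ k : ℕ, n = n % 2 + 2 * k := ⟨(n / 2).toNat, by omega⟩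
  calc f n = f (n % 2 + 2 * k) := congrArg f hk
    _ = f (n % 2) := hstep k (by omega)

lemma exists_natAbs_sub_eq_one_of_eq_or_eq_add_two {a b K : ℤ} (hK : 2 ≤ K) (ha : a ∈ Ico 0 K)
    (hb : b ∈ Ico 0 K) (hab : b = a ∨ b = a + 2) :
    ∃ r ∈ Ico 0 K, (a - r).natAbs = 1 ∧ (r - b).natAbs = 1 := by
  simp only [mem_Ico] at *
  by_cases h : b = a + 2 ∨ a = 0
  · exact ⟨a + 1, by omega⟩
  · exact ⟨a - 1, by omega⟩

def baseCell (v : ZMod 2 × ZMod 2) : ℤ × ℤ × ℤ :=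
  (v.2.val, v.1.val, 0)

lemma slabColoring_baseCell (v : ZMod 2 × ZMod 2) : slabColoring (baseCell v) = v := by
  simp [slabColoring, baseCell]

lemma baseCell_mem (v : ZMod 2 × ZMod 2) :
    baseCell v ∈ ({0, 1} ×ˢ {0, 1} ×ˢ {0} : Set (ℤ × ℤ × ℤ)) := by
  have h₁ := ZMod.val_lt v.1
  have h₂ := ZMod.val_lt v.2
  simp only [baseCell, mem_prod, mem_insert_iff, mem_singleton_iff, and_true]
  omega

namespace IsSlabTypeColoring

variable {α : Type*} {R : Set (ℤ × ℤ × ℤ)} {c : ℤ × ℤ × ℤ → α} {L M N x x' y y' z z' : ℤ}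

theorem apply_eq_of_cube (hc : IsSlabTypeColoring R c) (hα : Nat.card α = 4)
    (hx : (x - x').natAbs = 1) (hy : (y - y').natAbs = 1) (hz : (z - z').natAbs = 1)
    (hR : {x, x'} ×ˢ {y, y'} ×ˢ {z, z'} ⊆ R) : c (x, y, z) = c (x', y', z') := by
  have hinj : ∀ S, IsSlab S → S ⊆ {x, x'} ×ˢ {y, y'} ×ˢ {z, z'} → InjOn c S :=
    fun S hS hSR => hc S hS (hSR.trans hR)
  have hbottom := hinj _ (isSlab_prod_xy hx hy z)
    (prod_mono subset_rfl (prod_mono subset_rfl (by simp)))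
  have hfront := hinj _ (isSlab_prod_xz hx y' hz)
    (prod_mono subset_rfl (prod_mono (by simp) subset_rfl))
  have hside := hinj _ (isSlab_prod_yz x' hy hz) (prod_mono (by simp) subset_rfl)
  have : Finite α := Nat.finite_of_card_ne_zero (by omega)
  have hsurj := hbottom.image_eq_univ_of_ncard_eq (by
    rw [hα, ncard_prod, ncard_prod, ncard_pair (by omega), ncard_pair (by omega), ncard_singleton])
  obtain ⟨⟨a, b, d⟩, hs, hcs⟩ : c (x', y', z') ∈ c '' _ := hsurj ▸ mem_univ _
  simp only [mem_prod, mem_insert_iff, mem_singleton_iff] at hs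
  rcases hs with ⟨rfl | rfl, rfl | rfl, rfl⟩
  · exact hcs
  · have := hfront (by simp) (by simp) hcs
    simp at this; omega
  · have := hside (by simp) (by simp) hcs
    simp at this; omega
  · have := hside (by simp) (by simp) hcs
    simp at this; omega

theorem apply_eq_of_natAbs_sub_eq_one (hc : IsSlabTypeColoring (Box L M N) c)
    (hα : Nat.card α = 4) (hp : (x, y, z) ∈ Box L M N) (hq : (x', y', z') ∈ Box L M N)
    (hx : (x - x').natAbs = 1) (hy : (y - y').natAbs = 1) (hz : (z - z').natAbs = 1) :
    c (x, y, z) = c (x', y', z') := by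
  rw [box_eq_prod] at hc hp hq
  exact hc.apply_eq_of_cube hα hx hy hz <| prod_mono (pair_subset hp.1 hq.1) <|
    prod_mono (pair_subset hp.2.1 hq.2.1) (pair_subset hp.2.2 hq.2.2)

theorem apply_eq_of_eq_or_eq_add_two (hc : IsSlabTypeColoring (Box L M N) c)
    (hα : Nat.card α = 4) (hL : 2 ≤ L) (hM : 2 ≤ M) (hN : 2 ≤ N)
    (hp : (x, y, z) ∈ Box L M N) (hq : (x', y', z') ∈ Box L M N)
    (hx : x' = x ∨ x' = x + 2) (hy : y' = y ∨ y' = y + 2) (hz : z' = z ∨ z' = z + 2) :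
    c (x, y, z) = c (x', y', z') := by
  obtain ⟨hx₀, hy₀, hz₀⟩ := box_eq_prod L M N ▸ hp
  obtain ⟨hx₁, hy₁, hz₁⟩ := box_eq_prod L M N ▸ hq
  obtain ⟨r₁, hr₁, hxr, hrx⟩ := exists_natAbs_sub_eq_one_of_eq_or_eq_add_two hL hx₀ hx₁ hx
  obtain ⟨r₂, hr₂, hyr, hry⟩ := exists_natAbs_sub_eq_one_of_eq_or_eq_add_two hM hy₀ hy₁ hy
  obtain ⟨r₃, hr₃, hzr, hrz⟩ := exists_natAbs_sub_eq_one_of_eq_or_eq_add_two hN hz₀ hz₁ hz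
  have hr : (r₁, r₂, r₃) ∈ Box L M N := by rw [box_eq_prod]; exact ⟨hr₁, hr₂, hr₃⟩
  exact (hc.apply_eq_of_natAbs_sub_eq_one hα hp hr hxr hyr hzr).trans
    (hc.apply_eq_of_natAbs_sub_eq_one hα hr hq hrx hry hrz)

theorem apply_eq_apply_emod_two (hc : IsSlabTypeColoring (Box L M N) c)
    (hα : Nat.card α = 4) (hL : 2 ≤ L) (hM : 2 ≤ M) (hN : 2 ≤ N)
    (hp : (x, y, z) ∈ Box L M N) : c (x, y, z) = c (x % 2, y % 2, z % 2) := by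
  rw [mem_box] at hp
  calc c (x, y, z)
      = c (x % 2, y, z) := Int.apply_eq_apply_emod_two (K := L) (f := fun t => c (t, y, z))
        (fun m h₀ h₂ => hc.apply_eq_of_eq_or_eq_add_two hα hL hM hN
          (mem_box.2 (by omega)) (mem_box.2 (by omega)) (.inr rfl) (.inl rfl) (.inl rfl))
        (mem_Ico.2 ⟨by omega, by omega⟩)
    _ = c (x % 2, y % 2, z) := Int.apply_eq_apply_emod_two (K := M) (f := fun t => c (x % 2, t, z))
        (fun m h₀ h₂ => hc.apply_eq_of_eq_or_eq_add_two hα hL hM hN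
          (mem_box.2 (by omega)) (mem_box.2 (by omega)) (.inl rfl) (.inr rfl) (.inl rfl))
        (mem_Ico.2 ⟨by omega, by omega⟩)
    _ = c (x % 2, y % 2, z % 2) :=
        Int.apply_eq_apply_emod_two (K := N) (f := fun t => c (x % 2, y % 2, t))
        (fun m h₀ h₂ => hc.apply_eq_of_eq_or_eq_add_two hα hL hM hN
          (mem_box.2 (by omega)) (mem_box.2 (by omega)) (.inl rfl) (.inl rfl) (.inr rfl))
        (mem_Ico.2 ⟨by omega, by omega⟩)

theorem apply_eq_apply_baseCell (hc : IsSlabTypeColoring (Box L M N) c)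
    (hα : Nat.card α = 4) (hL : 2 ≤ L) (hM : 2 ≤ M) (hN : 2 ≤ N) {p : ℤ × ℤ × ℤ}
    (hp : p ∈ Box L M N) : c p = c (baseCell (slabColoring p)) := by
  obtain ⟨x, y, z⟩ := p
  have hbase : baseCell (slabColoring (x, y, z)) = ((x + z) % 2, (y + z) % 2, 0) := by
    simp only [baseCell, slabColoring, ZMod.val_intCast, Nat.cast_ofNat]
  rw [hc.apply_eq_apply_emod_two hα hL hM hN hp, hbase]
  rw [mem_box] at hp
  rcases Int.emod_two_eq z with hz | hz
  · exact congrArg c (by simp only [Prod.mk.injEq]; omega)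
  · exact hc.apply_eq_of_natAbs_sub_eq_one hα (mem_box.2 (by omega)) (mem_box.2 (by omega))
      (by omega) (by omega) (by omega)

end IsSlabTypeColoring

theorem slab_type_coloring_unique (L M N : ℤ) (hL : 2 ≤ L) (hM : 2 ≤ M) (hN : 2 ≤ N)
    (c : ℤ × ℤ × ℤ → ZMod 2 × ZMod 2)
    (hc : ∀ S : Set (ℤ × ℤ × ℤ), IsSlab S → S ⊆ Box L M N → Set.InjOn c S) :
    ∃ σ : Equiv.Perm (ZMod 2 × ZMod 2),
      ∀ p ∈ Box L M N, c p = σ (slabColoring p) := by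
  have hcard : Nat.card (ZMod 2 × ZMod 2) = 4 := by simp
  have hbase : InjOn c ({0, 1} ×ˢ {0, 1} ×ˢ {0}) := by
    refine hc _ (isSlab_prod_xy rfl rfl 0) ?_
    rintro ⟨a, b, d⟩ h
    simp only [mem_prod, mem_insert_iff, mem_singleton_iff] at h
    exact mem_box.2 (by omega)
  have hσ : Function.Injective (c ∘ baseCell) := injOn_univ.1 <|
    hbase.comp (Function.LeftInverse.injective slabColoring_baseCell).injOn
      fun v _ => baseCell_mem v
  exact ⟨Equiv.ofBijective _ (Finite.injective_iff_bijective.1 hσ),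
    fun p hp => IsSlabTypeColoring.apply_eq_apply_baseCell hc hcard hL hM hN hp⟩
end

section
/- There exists a slab tiling of the 6×6×5 box that admits no flip: no two slabs of the tiling have union equal to a 2×2×2 block of cells. Consequently this tiling forms a flip connected component of size one. -/
/-! The tiling `rigidTiling665` below is explicit, so the theorem is a finite check. If the union
of two slabs were the 2×2×2 block with least cell `q`, then `q` and the seven other cells of that
block would all lie in the union; the check rules this out for every cell `q` of every pair of
slabs of the tiling. -/

/-- `(o, x, y, z)` is the slab with least cell `(x, y, z)` perpendicular to the `z`-, `y`- or
`x`-axis according as `o` is `0`, `1` or `2`. -/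
abbrev SlabDescriptor := Fin 3 × ℤ × ℤ × ℤ

def slabCells : SlabDescriptor → List (ℤ × ℤ × ℤ)
  | (0, x, y, z) => [(x, y, z), (x + 1, y, z), (x, y + 1, z), (x + 1, y + 1, z)]
  | (1, x, y, z) => [(x, y, z), (x + 1, y, z), (x, y, z + 1), (x + 1, y, z + 1)]
  | (2, x, y, z) => [(x, y, z), (x, y + 1, z), (x, y, z + 1), (x, y + 1, z + 1)]

def blockCells : ℤ × ℤ × ℤ → List (ℤ × ℤ × ℤ)
  | (x, y, z) => [(x, y, z), (x + 1, y, z), (x, y + 1, z), (x + 1, y + 1, z),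
      (x, y, z + 1), (x + 1, y, z + 1), (x, y + 1, z + 1), (x + 1, y + 1, z + 1)]

def tilingOf (ds : List SlabDescriptor) : Set (Set (ℤ × ℤ × ℤ)) :=
  (fun d => {p | p ∈ slabCells d}) '' {d | d ∈ ds}

theorem isSlab_slabCells : ∀ d : SlabDescriptor, IsSlab {p | p ∈ slabCells d}
  | (0, x, y, z) => Or.inl ⟨x, y, z, by ext; simp [slabCells]⟩
  | (1, x, y, z) => Or.inr <| Or.inl ⟨x, y, z, by ext; simp [slabCells]⟩
  | (2, x, y, z) => Or.inr <| Or.inr ⟨x, y, z, by ext; simp [slabCells]⟩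

theorem not_isBlock222_of_forall_exists_not_mem {L : List (ℤ × ℤ × ℤ)}
    (h : ∀ q ∈ L, ∃ p ∈ blockCells q, p ∉ L) : ¬ IsBlock222 {p | p ∈ L} := by
  rintro ⟨x, y, z, hB⟩
  have hblock : ∀ p ∈ blockCells (x, y, z), p ∈ L := fun p hp => by
    have : p ∈ {p | p ∈ L} := hB ▸ by simpa [blockCells] using hp
    exact this
  obtain ⟨p, hp, hpL⟩ := h (x, y, z) (hblock _ (by simp [blockCells]))
  exact hpL (hblock p hp)

theorem isSlabTiling_tilingOf {R : Finset (ℤ × ℤ × ℤ)} {ds : List SlabDescriptor}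
    (hsub : ∀ d ∈ ds, ∀ p ∈ slabCells d, p ∈ R)
    (hcover : ∀ p ∈ R, ∃ d ∈ ds, p ∈ slabCells d)
    (hdisj : ∀ d ∈ ds, ∀ d' ∈ ds, d ≠ d' → ∀ p ∈ slabCells d, p ∉ slabCells d') :
    IsSlabTiling R (tilingOf ds) := by
  refine ⟨?_, ?_, ?_⟩
  · rintro S ⟨d, -, rfl⟩
    exact isSlab_slabCells d
  · rintro S ⟨d, hd, rfl⟩ S' ⟨d', hd', rfl⟩ hne
    exact Set.disjoint_left.2 (hdisj d hd d' hd' (by rintro rfl; exact hne rfl))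
  · ext p
    constructor
    · rintro ⟨S, ⟨d, hd, rfl⟩, hp⟩
      exact hsub d hd p hp
    · intro hp
      obtain ⟨d, hd, hpd⟩ := hcover p hp
      exact ⟨_, ⟨d, hd, rfl⟩, hpd⟩

theorem tilingOf_union_not_isBlock222 {ds : List SlabDescriptor}
    (h : ∀ d ∈ ds, ∀ d' ∈ ds, ∀ q ∈ slabCells d ++ slabCells d',
      ∃ p ∈ blockCells q, p ∉ slabCells d ++ slabCells d') :
    ∀ P₁ ∈ tilingOf ds, ∀ P₂ ∈ tilingOf ds, ¬ IsBlock222 (P₁ ∪ P₂) := by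
  rintro _ ⟨d, hd, rfl⟩ _ ⟨d', hd', rfl⟩
  have hunion : {p | p ∈ slabCells d} ∪ {p | p ∈ slabCells d'} =
      {p | p ∈ slabCells d ++ slabCells d'} := by
    ext; simp
  rw [hunion]
  exact not_isBlock222_of_forall_exists_not_mem (h d hd d' hd')

theorem box_eq_coe_Ico (L M N : ℤ) :
    Box L M N = ↑(Finset.Ico 0 L ×ˢ Finset.Ico 0 M ×ˢ Finset.Ico 0 N) := by
  ext
  simp [Box, and_assoc]

def rigidTiling665 : List SlabDescriptor :=
  [ (1, 0, 0, 0), (1, 0, 0, 2), (0, 0, 0, 4), (2, 0, 1, 0), (2, 0, 1, 2),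
    (0, 0, 2, 4), (2, 0, 3, 0), (2, 0, 3, 2), (0, 0, 4, 4), (1, 0, 5, 0),
    (1, 0, 5, 2), (0, 1, 1, 0), (2, 1, 1, 1), (0, 1, 1, 3), (0, 1, 3, 0),
    (2, 1, 3, 1), (0, 1, 3, 3), (1, 2, 0, 0), (0, 2, 0, 2), (1, 2, 0, 3),
    (0, 2, 1, 1), (0, 2, 1, 4), (0, 2, 2, 2), (0, 2, 3, 1), (0, 2, 3, 4),
    (0, 2, 4, 2), (1, 2, 5, 0), (1, 2, 5, 3), (0, 3, 1, 0), (0, 3, 1, 3),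
    (0, 3, 3, 0), (0, 3, 3, 3), (1, 4, 0, 0), (1, 4, 0, 2), (0, 4, 0, 4),
    (2, 4, 1, 1), (0, 4, 2, 4), (2, 4, 3, 1), (0, 4, 4, 4), (1, 4, 5, 0),
    (1, 4, 5, 2), (2, 5, 1, 0), (2, 5, 1, 2), (2, 5, 3, 0), (2, 5, 3, 2) ]

theorem isSlabTiling_rigidTiling665 : IsSlabTiling (Box 6 6 5) (tilingOf rigidTiling665) := by
  rw [box_eq_coe_Ico]
  exact isSlabTiling_tilingOf (by decide +kernel) (by decide +kernel) (by decide +kernel)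

theorem rigidTiling665_union_not_isBlock222 :
    ∀ P₁ ∈ tilingOf rigidTiling665, ∀ P₂ ∈ tilingOf rigidTiling665, ¬ IsBlock222 (P₁ ∪ P₂) :=
  tilingOf_union_not_isBlock222 (by decide +kernel)

theorem box_665_rigid_tiling :
    ∃ t : Set (Set (ℤ × ℤ × ℤ)), IsSlabTiling (Box 6 6 5) t ∧
      (∀ P₁ ∈ t, ∀ P₂ ∈ t, ¬ IsBlock222 (P₁ ∪ P₂)) :=
  ⟨_, isSlabTiling_rigidTiling665, rigidTiling665_union_not_isBlock222⟩
end
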